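/- arXiv:2405.07073 — 2 statements merged into one kernel-verified Lean document; each statement's English description precedes it below -/
import Mathlib

section
/- Let E be a vector lattice (Riesz space) over the reals and let A ⊆ E be a solid set. Then the balanced convex hull Conv_b(A) is also solid. -/
/-- A set in a vector lattice is solid if `|x| ≤ |y|` and `y ∈ S` imply `x ∈ S`. -/
def IsSolidSet {E : Type*} [Lattice E] [AddCommGroup E] (S : Set E) : Prop :=
  ∀ ⦃x y : E⦄, |x| ≤ |y| → y ∈ S → x ∈ S

/-- The balanced convex hull (absolutely convex hull) of a set in a real vector space:
all combinations `∑ λᵢ xᵢ` with `xᵢ ∈ A` and `∑ |λᵢ| ≤ 1`. -/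
def balConvHull {X : Type*} [AddCommGroup X] [Module ℝ X] (A : Set X) : Set X :=
  {x | ∃ (n : ℕ) (c : Fin n → ℝ) (v : Fin n → X),
    (∀ i, v i ∈ A) ∧ (∑ i, |c i|) ≤ 1 ∧ x = ∑ i, c i • v i}

/-!
If `|x| ≤ |∑ cᵢ vᵢ|` then `|x| ≤ ∑ |cᵢ| |vᵢ|`, and the Riesz decomposition property splits
`x = ∑ fᵢ` with `|fᵢ| ≤ |cᵢ| |vᵢ|`. Each `fᵢ` is `|cᵢ| wᵢ` with `|wᵢ| ≤ |vᵢ|`, so `wᵢ ∈ A` by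
solidity, and `x = ∑ |cᵢ| wᵢ` lies in the balanced convex hull.
-/

section LatticeOrderedGroup

variable {E : Type*} [Lattice E] [AddCommGroup E] [IsOrderedAddMonoid E]

theorem eq_zero_of_abs_nonpos {a : E} (h : |a| ≤ 0) : a = 0 :=
  le_antisymm (abs_le'.mp h).1 (neg_nonpos.mp (abs_le'.mp h).2)

theorem exists_add_eq_of_abs_le_add {x b c : E} (hb : 0 ≤ b) (hc : 0 ≤ c) (h : |x| ≤ b + c) :
    ∃ y z : E, |y| ≤ b ∧ |z| ≤ c ∧ y + z = x := by
  obtain ⟨hxle, hnegxle⟩ := abs_le'.mp h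
  -- Truncate `x` to `[-b, b]`; the remainder `x - y` then lies in `[-c, c]`.
  set y := (x ⊔ -b) ⊓ b
  have hy : |y| ≤ b :=
    abs_le'.mpr ⟨inf_le_right, neg_le.mp (le_inf le_sup_right (neg_le_self hb))⟩
  have hlow : x - c ≤ y :=
    le_inf ((sub_le_self x hc).trans le_sup_left) (sub_le_iff_le_add.mpr hxle)
  have hup : y ≤ x + c := inf_le_left.trans <|
    sup_le (le_add_of_nonneg_right hc)
      (neg_le.mp (by rw [neg_add']; exact sub_le_iff_le_add.mpr hnegxle))
  refine ⟨y, x - y, hy, abs_le'.mpr ⟨sub_le_comm.mp hlow, ?_⟩, add_sub_cancel y x⟩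
  rw [neg_sub]
  exact sub_le_iff_le_add'.mpr hup

theorem exists_sum_eq_of_abs_le_sum {n : ℕ} (b : Fin n → E) (hb : ∀ i, 0 ≤ b i) {x : E}
    (hx : |x| ≤ ∑ i, b i) : ∃ f : Fin n → E, (∀ i, |f i| ≤ b i) ∧ ∑ i, f i = x := by
  induction n generalizing x with
  | zero =>
    exact ⟨0, finZeroElim, (eq_zero_of_abs_nonpos (by simpa using hx)).symm⟩
  | succ n ih =>
    rw [Fin.sum_univ_succ] at hx
    obtain ⟨y, z, hy, hz, rfl⟩ :=
      exists_add_eq_of_abs_le_add (hb 0) (Finset.sum_nonneg fun i _ ↦ hb i.succ) hx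
    obtain ⟨g, hg, rfl⟩ := ih (fun i ↦ b i.succ) (fun i ↦ hb i.succ) hz
    exact ⟨Fin.cons y g, Fin.forall_fin_succ.mpr ⟨hy, hg⟩, Fin.sum_cons y g⟩

end LatticeOrderedGroup

section VectorLattice

variable {E : Type*} [Lattice E] [AddCommGroup E] [Module ℝ E] [PosSMulMono ℝ E]

theorem abs_smul_of_nonneg {r : ℝ} (hr : 0 ≤ r) (a : E) : |r • a| = r • |a| := by
  rcases hr.eq_or_lt with rfl | hr
  · rw [zero_smul, zero_smul, abs, neg_zero, sup_idem]
  · rw [abs, abs, ← smul_neg]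
    exact ((OrderIso.smulRight hr).map_sup a (-a)).symm

theorem abs_smul' (r : ℝ) (a : E) : |r • a| = |r| • |a| := by
  rcases le_total 0 r with hr | hr
  · rw [abs_of_nonneg hr, abs_smul_of_nonneg hr]
  · rw [abs_of_nonpos hr, ← abs_neg, ← neg_smul, abs_smul_of_nonneg (neg_nonneg.mpr hr)]

theorem exists_smul_eq_of_abs_le_smul [IsOrderedAddMonoid E] {r : ℝ} (hr : 0 ≤ r) {f v : E}
    (h : |f| ≤ r • |v|) :
    ∃ w : E, |w| ≤ |v| ∧ r • w = f := by
  rcases hr.eq_or_lt with rfl | hr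
  · refine ⟨0, by simp, ?_⟩
    rw [smul_zero, eq_comm]
    exact eq_zero_of_abs_nonpos (by simpa using h)
  refine ⟨r⁻¹ • f, ?_, smul_inv_smul₀ hr.ne' f⟩
  calc |r⁻¹ • f| = r⁻¹ • |f| := abs_smul_of_nonneg (inv_nonneg.mpr hr.le) f
    _ ≤ r⁻¹ • r • |v| := smul_le_smul_of_nonneg_left h (inv_nonneg.mpr hr.le)
    _ = |v| := inv_smul_smul₀ hr.ne' _

end VectorLattice

theorem isSolid_balConvHull {E : Type*} [Lattice E] [AddCommGroup E] [Module ℝ E]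
    [CovariantClass E E (· + ·) (· ≤ ·)] [PosSMulMono ℝ E]
    (A : Set E) (hA : IsSolidSet A) : IsSolidSet (balConvHull A) := by
  have : IsOrderedAddMonoid E := { add_le_add_left := fun _ _ h c ↦ add_le_add_left h c }
  rintro x y hxy ⟨n, c, v, hv, hc, rfl⟩
  have hx : |x| ≤ ∑ i, |c i| • |v i| := by
    refine hxy.trans ((Finset.le_sum_of_subadditive _ abs_zero.le abs_add_le _ _).trans_eq ?_)
    simp_rw [abs_smul']
  obtain ⟨f, hf, rfl⟩ := exists_sum_eq_of_abs_le_sum _ (fun i ↦ by positivity) hx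
  choose w hw hwf using fun i ↦ exists_smul_eq_of_abs_le_smul (abs_nonneg (c i)) (hf i)
  exact ⟨n, fun i ↦ |c i|, w, fun i ↦ hA (hw i) (hv i), by simpa using hc,
    Finset.sum_congr rfl fun i _ ↦ (hwf i).symm⟩
end

section
/- Let E be a vector lattice (Riesz space) over the reals, let p be a Riesz seminorm on E, and let x₀ ∈ E with x₀ ≥ 0. Then there exists a positive linear functional f : E → ℝ such that f(x₀) = p(x₀) and |f(x)| ≤ p(x) for every x ∈ E. -/
/-!
The map `x ↦ p x⁺` is sublinear, agrees with `p` on the positive cone and vanishes on the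
negative cone. It dominates `c • x₀ ↦ c * p x₀` on the line through `x₀`, so Hahn–Banach extends
this functional to some `g ≤ p ∘ (·)⁺` on all of `E`. Such a `g` is positive since
`g (-x) ≤ p 0 = 0` for `x ≥ 0`, and `|g x| ≤ p x` because `p x⁺ ≤ p x` and `p (-x) = p x`.
-/

section PosPart

variable {E : Type*} [Lattice E] [AddCommGroup E]

lemma posPart_smul_of_pos [Module ℝ E] [PosSMulMono ℝ E] {c : ℝ} (hc : 0 < c) (x : E) :
    (c • x)⁺ = c • x⁺ := by
  have h := (OrderIso.smulRight hc).map_sup x 0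
  simp only [OrderIso.smulRight_apply, smul_zero] at h
  rw [posPart_def, posPart_def, h]

variable [AddLeftMono E]

lemma posPart_add_le (x y : E) : (x + y)⁺ ≤ x⁺ + y⁺ :=
  sup_le (add_le_add (le_posPart x) (le_posPart y))
    (add_nonneg (posPart_nonneg x) (posPart_nonneg y))

lemma posPart_le_abs (x : E) : x⁺ ≤ |x| :=
  sup_le (le_abs_self x) (abs_nonneg x)

end PosPart

section RieszSeminorm

variable {E : Type*} [AddCommGroup E] {p : E → ℝ}

lemma apply_zero_of_abs_smul [Module ℝ E] (hsmul : ∀ (a : ℝ) (x : E), p (a • x) = |a| * p x) :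
    p 0 = 0 := by
  simpa using hsmul 0 0

lemma smul_apply_eq_zero_of_smul_eq_zero [Module ℝ E]
    (hsmul : ∀ (a : ℝ) (x : E), p (a • x) = |a| * p x) {c : ℝ} {x : E} (h : c • x = 0) :
    c • p x = 0 := by
  have h0 : |c| * p x = 0 := by rw [← hsmul, h, apply_zero_of_abs_smul hsmul]
  simpa using h0

variable [Lattice E]

lemma apply_posPart_smul_of_pos [Module ℝ E] [PosSMulMono ℝ E]
    (hsmul : ∀ (a : ℝ) (x : E), p (a • x) = |a| * p x) {c : ℝ} (hc : 0 < c) (x : E) :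
    p (c • x)⁺ = c * p x⁺ := by
  rw [posPart_smul_of_pos hc, hsmul, abs_of_pos hc]

variable [AddLeftMono E]

lemma apply_le_apply_of_nonneg_of_le (hmono : ∀ x y : E, |x| ≤ |y| → p x ≤ p y) {x y : E}
    (hx : 0 ≤ x) (hxy : x ≤ y) : p x ≤ p y :=
  hmono x y (by rwa [abs_of_nonneg hx, abs_of_nonneg (hx.trans hxy)])

lemma apply_posPart_le (hmono : ∀ x y : E, |x| ≤ |y| → p x ≤ p y) (x : E) : p x⁺ ≤ p x :=
  hmono _ _ (by rw [abs_of_nonneg (posPart_nonneg x)]; exact posPart_le_abs x)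

lemma apply_posPart_add_le (hadd : ∀ x y : E, p (x + y) ≤ p x + p y)
    (hmono : ∀ x y : E, |x| ≤ |y| → p x ≤ p y) (x y : E) : p (x + y)⁺ ≤ p x⁺ + p y⁺ :=
  (apply_le_apply_of_nonneg_of_le hmono (posPart_nonneg _) (posPart_add_le x y)).trans (hadd _ _)

lemma mul_apply_le_apply_posPart_smul [Module ℝ E] [PosSMulMono ℝ E]
    (hsmul : ∀ (a : ℝ) (x : E), p (a • x) = |a| * p x)
    (hmono : ∀ x y : E, |x| ≤ |y| → p x ≤ p y) {x : E} (hx : 0 ≤ x) (c : ℝ) :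
    c * p x ≤ p (c • x)⁺ := by
  have hp0 := apply_zero_of_abs_smul hsmul
  rcases lt_or_ge 0 c with hc | hc
  · rw [apply_posPart_smul_of_pos hsmul hc, posPart_eq_self.2 hx]
  · have hpx : 0 ≤ p x := hp0 ▸ apply_le_apply_of_nonneg_of_le hmono le_rfl hx
    have hcx : c • x ≤ 0 := by simpa using neg_nonpos.2 (smul_nonneg (neg_nonneg.2 hc) hx)
    rw [posPart_eq_zero.2 hcx, hp0]
    exact mul_nonpos_of_nonpos_of_nonneg hc hpx

end RieszSeminorm

section DominatedFunctional

variable {E : Type*} [Lattice E] [AddCommGroup E] [AddLeftMono E] [Module ℝ E] {p : E → ℝ}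
  {g : E →ₗ[ℝ] ℝ}

lemma LinearMap.nonneg_of_le_apply_posPart (hp0 : p 0 = 0) (hg : ∀ x, g x ≤ p x⁺) {x : E}
    (hx : 0 ≤ x) : 0 ≤ g x := by
  have h := hg (-x)
  rw [posPart_eq_zero.2 (neg_nonpos.2 hx), hp0, map_neg] at h
  linarith

lemma LinearMap.abs_le_of_le_apply_posPart (hmono : ∀ x y : E, |x| ≤ |y| → p x ≤ p y)
    (hg : ∀ x, g x ≤ p x⁺) (x : E) : |g x| ≤ p x := by
  have h_neg : -g x ≤ p x :=
    calc -g x = g (-x) := (map_neg g x).symm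
      _ ≤ p (-x)⁺ := hg (-x)
      _ ≤ p (-x) := apply_posPart_le hmono (-x)
      _ ≤ p x := hmono _ _ (abs_neg x).le
  exact abs_le.2 ⟨by linarith, (hg x).trans (apply_posPart_le hmono x)⟩

end DominatedFunctional

theorem exists_positive_functional_of_riesz_seminorm {E : Type*} [Lattice E] [AddCommGroup E]
    [Module ℝ E] [CovariantClass E E (· + ·) (· ≤ ·)] [PosSMulMono ℝ E]
    (p : E → ℝ)
    (hadd : ∀ x y : E, p (x + y) ≤ p x + p y)
    (hsmul : ∀ (a : ℝ) (x : E), p (a • x) = |a| * p x)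
    (hmono : ∀ x y : E, |x| ≤ |y| → p x ≤ p y)
    (x₀ : E) (hx₀ : 0 ≤ x₀) :
    ∃ f : E →ₗ[ℝ] ℝ, (∀ x : E, 0 ≤ x → 0 ≤ f x) ∧ f x₀ = p x₀ ∧ ∀ x : E, |f x| ≤ p x := by
  have hker : ∀ c : ℝ, c • x₀ = 0 → c • p x₀ = 0 := fun _ ↦
    smul_apply_eq_zero_of_smul_eq_zero hsmul
  let f₀ : E →ₗ.[ℝ] ℝ := LinearPMap.mkSpanSingleton' x₀ (p x₀) hker
  have hf₀ : ∀ y : f₀.domain, f₀ y ≤ p (y : E)⁺ := by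
    rintro ⟨y, hy⟩
    obtain ⟨c, rfl⟩ := Submodule.mem_span_singleton.1 hy
    rw [LinearPMap.mkSpanSingleton'_apply]
    exact mul_apply_le_apply_posPart_smul hsmul hmono hx₀ c
  obtain ⟨g, hg_ext, hg_le⟩ := exists_extension_of_le_sublinear f₀ (fun x ↦ p x⁺)
    (fun _ hc x ↦ apply_posPart_smul_of_pos hsmul hc x) (apply_posPart_add_le hadd hmono) hf₀
  refine ⟨g, fun x hx ↦ g.nonneg_of_le_apply_posPart (apply_zero_of_abs_smul hsmul) hg_le hx,
    ?_, g.abs_le_of_le_apply_posPart hmono hg_le⟩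
  rw [hg_ext ⟨x₀, Submodule.mem_span_singleton_self x₀⟩]
  exact LinearPMap.mkSpanSingleton'_apply_self x₀ (p x₀) hker _
end
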